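/- Let 0 → (A_i) → (B_i) → (C_i) → 0 be a short exact sequence of inverse systems of abelian groups indexed by the natural numbers. If the system (A_i) satisfies the Mittag-Leffler condition, then the induced sequence 0 → lim A_i → lim B_i → lim C_i → 0 of inverse limits is exact. -/

import Mathlib

/-- The iterated transition map `A (i + k) →+ A i` of an inverse system of abelian
groups indexed by `ℕ`. -/
def iterTrans {A : ℕ → Type*} [∀ i, AddCommGroup (A i)]
    (f : ∀ i, A (i + 1) →+ A i) (i : ℕ) : ∀ k : ℕ, A (i + k) →+ A i
  | 0 => AddMonoidHom.id _
  | (k + 1) => (iterTrans f i k).comp (f (i + k))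

/-- The inverse limit of an inverse system of abelian groups indexed by `ℕ`,
as a subgroup of the product. -/
def invLim {A : ℕ → Type*} [∀ i, AddCommGroup (A i)]
    (f : ∀ i, A (i + 1) →+ A i) : AddSubgroup (∀ i, A i) where
  carrier := {a | ∀ i, f i (a (i + 1)) = a i}
  zero_mem' := by intro i; simp
  add_mem' := by intro a b ha hb i; simp [ha i, hb i]
  neg_mem' := by intro a ha i; simp [ha i]

/-- An inverse system of abelian groups satisfies the Mittag-Leffler condition if
for each `i` the decreasing chain of images of `A (i+k) →+ A i` stabilizes. -/
def MittagLeffler {A : ℕ → Type*} [∀ i, AddCommGroup (A i)]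
    (f : ∀ i, A (i + 1) →+ A i) : Prop :=
  ∀ i, ∃ k₀, ∀ k, k₀ ≤ k → (iterTrans f i k).range = (iterTrans f i k₀).range

/-!
Exactness at `lim A` and `lim B` is formal; the content is surjectivity onto `lim C`.
Lifting `c` termwise to some `b⁰` in `B` leaves a defect `g b⁰ᵢ₊₁ - b⁰ᵢ = α aᵢ`, and `b⁰`
can be corrected to a compatible family exactly when `a` lies in the image of
`x ↦ (xᵢ - f xᵢ₊₁)ᵢ`, i.e. when its class in `lim¹ A` vanishes. Under Mittag-Leffler,
the telescoping sums `yᵢ = ∑_{j < Nᵢ} f^j a_{i+j}` move `a` into the stable images, on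
which the transition maps are surjective, and there the equation is solved recursively.
-/

open Finset

section InverseSystem

variable {A : ℕ → Type*} [∀ i, AddCommGroup (A i)] (f : ∀ i, A (i + 1) →+ A i)

/-- Stated for a family `a` so that both sides typecheck without a cast along
`i + 1 + j = i + j + 1`. -/
theorem iterTrans_succ_apply (a : ∀ n, A n) (i j : ℕ) :
    f i (iterTrans f (i + 1) j (a (i + 1 + j))) = iterTrans f i (j + 1) (a (i + j + 1)) := by
  induction j generalizing a with
  | zero => rfl
  | succ j ih => exact ih fun n => f n (a (n + 1))

theorem range_iterTrans_succ (i j : ℕ) :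
    (iterTrans f i (j + 1)).range = (iterTrans f (i + 1) j).range.map (f i) := by
  classical
  ext x
  simp only [AddMonoidHom.mem_range, AddSubgroup.mem_map, exists_exists_eq_and]
  -- `Pi.single` embeds an element into a family, to which `iterTrans_succ_apply` applies
  constructor
  · rintro ⟨w, rfl⟩
    refine ⟨Pi.single (i + j + 1) w (i + 1 + j), ?_⟩
    rw [iterTrans_succ_apply f (Pi.single (i + j + 1) w), Pi.single_eq_same]
  · rintro ⟨w, rfl⟩
    refine ⟨Pi.single (i + 1 + j) w (i + j + 1), ?_⟩
    rw [← iterTrans_succ_apply f (Pi.single (i + 1 + j) w), Pi.single_eq_same]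

theorem antitone_range_iterTrans (i : ℕ) : Antitone fun k => (iterTrans f i k).range :=
  antitone_nat_of_succ_le fun k _ ⟨x, hx⟩ => ⟨f (i + k) x, hx⟩

def stableImage (i : ℕ) : AddSubgroup (A i) :=
  ⨅ k, (iterTrans f i k).range

/-- The cokernel of `invLimDiff f` is `lim¹` of the system, its kernel is `invLim f`. -/
def invLimDiff : (∀ i, A i) →+ (∀ i, A i) :=
  AddMonoidHom.mk' (fun x i => x i - f i (x (i + 1))) fun x y => by
    ext i
    simp only [Pi.add_apply, map_add]
    abel

@[simp]
theorem invLimDiff_apply (x : ∀ i, A i) (i : ℕ) : invLimDiff f x i = x i - f i (x (i + 1)) :=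
  rfl

theorem exists_invLimDiff_eq_of_le_map {S : ∀ i, AddSubgroup (A i)}
    (hS : ∀ i, S i ≤ (S (i + 1)).map (f i)) {t : ∀ i, A i} (ht : ∀ i, t i ∈ S i) :
    ∃ z, invLimDiff f z = t := by
  have hlift : ∀ i (x : S i), ∃ y : S (i + 1), f i y = x := fun i x => by
    obtain ⟨y, hy, hyx⟩ := hS i x.2
    exact ⟨⟨y, hy⟩, hyx⟩
  choose lift hlift using hlift
  let z : ∀ i, S i := fun i => Nat.rec 0 (fun i zi => lift i (zi - ⟨t i, ht i⟩)) i
  refine ⟨fun i => (z i).1, funext fun i => ?_⟩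
  change (z i).1 - f i (lift i (z i - ⟨t i, ht i⟩)).1 = t i
  rw [hlift]
  simp

namespace MittagLeffler

variable {f}

theorem range_iterTrans_eq_stableImage (hML : MittagLeffler f) (i : ℕ) :
    ∃ k₀, ∀ k, k₀ ≤ k → (iterTrans f i k).range = stableImage f i := by
  obtain ⟨k₀, hk₀⟩ := hML i
  refine ⟨k₀, fun k hk => le_antisymm (le_iInf fun m => ?_) (iInf_le _ k)⟩
  rcases le_total k m with hkm | hmk
  · exact (hk₀ k hk).trans (hk₀ m (hk.trans hkm)).symm |>.le
  · exact antitone_range_iterTrans f i hmk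

theorem stableImage_le_map (hML : MittagLeffler f) (i : ℕ) :
    stableImage f i ≤ (stableImage f (i + 1)).map (f i) := by
  obtain ⟨k, hk⟩ := hML.range_iterTrans_eq_stableImage i
  obtain ⟨l, hl⟩ := hML.range_iterTrans_eq_stableImage (i + 1)
  rw [← hk (max k l + 1) (by omega), ← hl (max k l) (le_max_right k l), range_iterTrans_succ]

theorem invLimDiff_surjective (hML : MittagLeffler f) : Function.Surjective (invLimDiff f) := by
  intro a
  choose k hk using hML.range_iterTrans_eq_stableImage
  set N := partialSups k
  let u : ∀ i, ℕ → A i := fun i j => iterTrans f i j (a (i + j))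
  let y : ∀ i, A i := fun i => ∑ j ∈ range (N i), u i j
  let t : ∀ i, A i := fun i => ∑ j ∈ Ico (N i) (N (i + 1) + 1), u i j
  have ht : ∀ i, t i ∈ stableImage f i := fun i => sum_mem fun j hj => by
    rw [← hk i j ((le_partialSups k i).trans (mem_Ico.mp hj).1)]
    exact ⟨_, rfl⟩
  have hN : ∀ i, N i ≤ N (i + 1) + 1 := fun i => (N.monotone i.le_succ).trans (Nat.le_succ _)
  have hy : invLimDiff f y = a - t := funext fun i => by
    have hshift : f i (y (i + 1)) = ∑ j ∈ range (N (i + 1) + 1), u i j - a i := by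
      rw [sum_range_succ', map_sum]
      simp only [u, iterTrans_succ_apply]
      exact (add_sub_cancel_right _ _).symm
    simp only [invLimDiff_apply, hshift, Pi.sub_apply, t, sum_Ico_eq_sub _ (hN i)]
    abel
  obtain ⟨z, hz⟩ := exists_invLimDiff_eq_of_le_map f hML.stableImage_le_map ht
  exact ⟨y + z, by rw [map_add, hy, hz, sub_add_cancel]⟩

end MittagLeffler

end InverseSystem

theorem MittagLeffler.exists_invLim_lift {A B C : ℕ → Type*}
    [∀ i, AddCommGroup (A i)] [∀ i, AddCommGroup (B i)] [∀ i, AddCommGroup (C i)]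
    {f : ∀ i, A (i + 1) →+ A i} {g : ∀ i, B (i + 1) →+ B i} {h : ∀ i, C (i + 1) →+ C i}
    {α : ∀ i, A i →+ B i} {β : ∀ i, B i →+ C i}
    (hα : ∀ i x, α i (f i x) = g i (α (i + 1) x)) (hβ : ∀ i x, β i (g i x) = h i (β (i + 1) x))
    (hsurj : ∀ i, Function.Surjective (β i)) (hexact : ∀ i, (α i).range = (β i).ker)
    (hML : MittagLeffler f) {c : ∀ i, C i} (hc : c ∈ invLim h) :
    ∃ b ∈ invLim g, ∀ i, β i (b i) = c i := by
  choose b₀ hb₀ using fun i => hsurj i (c i)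
  have hdefect : ∀ i, g i (b₀ (i + 1)) - b₀ i ∈ (α i).range := fun i => by
    rw [hexact, AddMonoidHom.mem_ker, map_sub, hβ, hb₀, hb₀, hc i, sub_self]
  choose a ha using hdefect
  obtain ⟨x, hx⟩ := hML.invLimDiff_surjective a
  have hβα : ∀ i y, β i (α i y) = 0 := fun i y => (hexact i).le ⟨y, rfl⟩
  refine ⟨fun i => b₀ i + α i (x i), fun i => ?_, fun i => by simp [hb₀, hβα]⟩
  show g i (b₀ (i + 1) + α (i + 1) (x (i + 1))) = b₀ i + α i (x i)
  have hxi : f i (x (i + 1)) = x i - a i := by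
    rw [← congrFun hx i, invLimDiff_apply, sub_sub_cancel]
  rw [map_add, ← hα, hxi, sub_eq_iff_eq_add'.mp (ha i).symm, map_sub]
  abel

/-- Let `0 → (Aᵢ) → (Bᵢ) → (Cᵢ) → 0` be a short exact sequence of inverse systems of
abelian groups indexed by `ℕ`.  If `(Aᵢ)` satisfies the Mittag-Leffler condition, then
the induced sequence `0 → lim Aᵢ → lim Bᵢ → lim Cᵢ → 0` of inverse limits is exact. -/
theorem stmt_2 {A B C : ℕ → Type*}
    [∀ i, AddCommGroup (A i)] [∀ i, AddCommGroup (B i)] [∀ i, AddCommGroup (C i)]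
    (f : ∀ i, A (i + 1) →+ A i) (g : ∀ i, B (i + 1) →+ B i) (h : ∀ i, C (i + 1) →+ C i)
    (α : ∀ i, A i →+ B i) (β : ∀ i, B i →+ C i)
    (hα : ∀ i, (α i).comp (f i) = (g i).comp (α (i + 1)))
    (hβ : ∀ i, (β i).comp (g i) = (h i).comp (β (i + 1)))
    (hinj : ∀ i, Function.Injective (α i))
    (hsurj : ∀ i, Function.Surjective (β i))
    (hexact : ∀ i, (α i).range = (β i).ker)
    (hML : MittagLeffler f) :
    -- exactness at `lim A`: the induced map `lim A → lim B` is injective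
    (∀ a ∈ invLim f, (∀ i, α i (a i) = 0) → a = 0) ∧
    -- exactness at `lim B`
    (∀ b ∈ invLim g, (∀ i, β i (b i) = 0) → ∃ a ∈ invLim f, ∀ i, α i (a i) = b i) ∧
    -- exactness at `lim C`: the induced map `lim B → lim C` is surjective
    (∀ c ∈ invLim h, ∃ b ∈ invLim g, ∀ i, β i (b i) = c i) := by
  have hα' : ∀ i x, α i (f i x) = g i (α (i + 1) x) := fun i => DFunLike.congr_fun (hα i)
  have hβ' : ∀ i x, β i (g i x) = h i (β (i + 1) x) := fun i => DFunLike.congr_fun (hβ i)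
  refine ⟨fun a _ ha => funext fun i => hinj i (by rw [ha, Pi.zero_apply, map_zero]),
    fun b hb hβb => ?_, fun c hc => hML.exists_invLim_lift hα' hβ' hsurj hexact hc⟩
  choose a ha using fun i => (hexact i).ge (hβb i)
  exact ⟨a, fun i => hinj i (by rw [hα', ha, ha, hb i]), ha⟩
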